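/- Let F = K ⊕ ℚ be the pseudo-cubic field attached to a positive non-square discriminant D, let I ⊂ F be a lattice with ℤ-basis (r₁,r₂,r₃), and let (s₁,s₂,s₃) be the dual basis of I^∨ with respect to the pseudo-trace pairing, i.e. tr_p(s_i·r_j) = δ_{ij}. Equip F⊗_ℚF with the pairing determined by ⟨x₁⊗x₂, y₁⊗y₂⟩ = tr_p(x₁y₁)·tr_p(x₂y₂), let Sym_ℚ(F) be the symmetric tensors, and let Λ₁ = {λ ∈ F⊗_ℚF : x·λ = λ·x for all x ∈ F}. Then the three symmetric tensors s₁⊗s₂ + s₂⊗s₁, s₁⊗s₃ + s₃⊗s₁, s₂⊗s₃ + s₃⊗s₂ form a ℚ-basis of N := {a ∈ Sym_ℚ(F) : ⟨a, r_i⊗r_i⟩ = 0 for i = 1,2,3}. Moreover, an element a = a₁·(s₂⊗s₃ + s₃⊗s₂) + a₂·(s₁⊗s₃ + s₃⊗s₁) + a₃·(s₁⊗s₂ + s₂⊗s₁) of N satisfies ⟨a, λ⟩ = 0 for all λ ∈ Λ₁ if and only if a₁·s₂s₃ + a₂·s₁s₃ + a₃·s₁s₂ = 0 in F. -/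

import Mathlib

open scoped TensorProduct

/-- The subspace `Sym_ℚ(F)` of symmetric tensors in `F ⊗_ℚ F`. -/
def symSub (F : Type) [AddCommGroup F] [Module ℚ F] : Submodule ℚ (F ⊗[ℚ] F) where
  carrier := {t | (TensorProduct.comm ℚ F F) t = t}
  add_mem' := by
    intro a b ha hb
    simp only [Set.mem_setOf_eq, map_add] at *
    rw [ha, hb]
  zero_mem' := by simp
  smul_mem' := by
    intro c a ha
    simp only [Set.mem_setOf_eq, map_smul] at *
    rw [ha]

/-- The submodule `Λ₁ = {λ ∈ F ⊗_ℚ F : x·λ = λ·x for all x ∈ F}`. -/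
def lambdaOne (F : Type) [CommRing F] [Algebra ℚ F] : Submodule ℚ (F ⊗[ℚ] F) where
  carrier := {t | ∀ x : F, LinearMap.rTensor F (LinearMap.mulLeft ℚ x) t
      = LinearMap.lTensor F (LinearMap.mulLeft ℚ x) t}
  add_mem' := by
    intro a b ha hb x
    simp only [map_add, ha x, hb x]
  zero_mem' := by intro x; simp
  smul_mem' := by
    intro c a ha x
    simp only [map_smul, ha x]

/-- The space `N = {a ∈ Sym_ℚ(F) : ⟨a, rᵢ ⊗ rᵢ⟩ = 0 for i = 1,2,3}`. -/
def nSub (F : Type) [CommRing F] [Algebra ℚ F]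
    (B : (F ⊗[ℚ] F) →ₗ[ℚ] (F ⊗[ℚ] F) →ₗ[ℚ] ℚ) (r : Fin 3 → F) :
    Submodule ℚ (F ⊗[ℚ] F) where
  carrier := {t | t ∈ symSub F ∧ ∀ i : Fin 3, B t (r i ⊗ₜ[ℚ] r i) = 0}
  add_mem' := by
    rintro a b ⟨ha1, ha2⟩ ⟨hb1, hb2⟩
    refine ⟨(symSub F).add_mem ha1 hb1, fun i => ?_⟩
    simp only [map_add, LinearMap.add_apply, ha2 i, hb2 i, add_zero]
  zero_mem' := ⟨(symSub F).zero_mem, by intro i; simp⟩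
  smul_mem' := by
    rintro c a ⟨ha1, ha2⟩
    refine ⟨(symSub F).smul_mem c ha1, fun i => ?_⟩
    simp only [map_smul, LinearMap.smul_apply, ha2 i, smul_zero]

/-!
The duality `tr_p(sᵢ rⱼ) = δᵢⱼ` makes `(sᵢ ⊗ sⱼ)` a basis of `F ⊗ F` in which the coordinates of
`t` are `⟨t, rᵢ ⊗ rⱼ⟩`. An element of `N` has a symmetric coordinate matrix with zero diagonal, so
it is a unique combination of the three tensors `sᵢ ⊗ sⱼ + sⱼ ⊗ sᵢ` with `i < j`.

The pairing is adjoint to multiplication in each tensor factor. Hence for `λ ∈ Λ₁` we get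
`⟨x ⊗ y, λ⟩ = ⟨xy ⊗ 1, λ⟩`, i.e. `⟨t, λ⟩ = ⟨m(t) ⊗ 1, λ⟩` with `m` the multiplication map.
Conversely the Casimir element `∑ rₖ ⊗ sₖ` lies in `Λ₁`, and `⟨t, (z ⊗ 1) ∑ rₖ ⊗ sₖ⟩ = tr_p(z m(t))`.
Since the trace form is nondegenerate, `t` annihilates `Λ₁` iff `m(t) = 0`, and
`m(a) = 2 (a₁s₂s₃ + a₂s₁s₃ + a₃s₁s₂)`.
-/

open LinearMap TensorProduct

theorem Module.Basis.repr_eq_of_biorthogonal {R M ι : Type*} [CommSemiring R] [AddCommMonoid M]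
    [Module R M] [DecidableEq ι] (e : Module.Basis ι R M) {φ : ι → Module.Dual R M}
    (h : ∀ i k, φ i (e k) = if i = k then 1 else 0) (m : M) (i : ι) :
    e.repr m i = φ i m := by
  have : e.coord i = φ i := e.ext fun k => by
    rw [Module.Basis.coord_apply, Module.Basis.repr_self, h, Finsupp.single_apply]
    simp only [eq_comm]
  exact LinearMap.congr_fun this m

section TraceDual

variable {R F ι : Type*} [CommSemiring R] [CommSemiring F] [Algebra R F]
  [DecidableEq ι]

def IsTraceDual (Tp : F →ₗ[R] R) (r s : ι → F) : Prop :=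
  ∀ i j, Tp (s i * r j) = if i = j then 1 else 0

variable {Tp : F →ₗ[R] R} {b : Module.Basis ι R F} {s : ι → F}

namespace IsTraceDual

theorem repr_eq (hs : IsTraceDual Tp b s) (w : F) (j : ι) : b.repr w j = Tp (s j * w) :=
  b.repr_eq_of_biorthogonal (φ := fun j => Tp ∘ₗ mulLeft R (s j)) hs w j

theorem trace_mul_eq_sum [Fintype ι] (hs : IsTraceDual Tp b s) (y w : F) :
    Tp (y * w) = ∑ k, Tp (y * b k) * Tp (s k * w) := by
  conv_lhs => rw [← b.sum_repr w]
  simp [Finset.mul_sum, hs.repr_eq, mul_comm]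

theorem eq_of_forall_trace_mul_eq (hs : IsTraceDual Tp b s) {x y : F}
    (h : ∀ z, Tp (x * z) = Tp (y * z)) : x = y :=
  b.ext_elem fun j => by rw [hs.repr_eq, hs.repr_eq, mul_comm, h, mul_comm]

theorem dualBases [Fintype ι] (hs : IsTraceDual Tp b s) :
    Module.DualBases s (fun i => Tp ∘ₗ mulRight R (b i)) where
  eval_same i := by simp [hs i i]
  eval_of_ne i j hij := by simp [hs j i, Ne.symm hij]
  total {x y} h := hs.eq_of_forall_trace_mul_eq fun z =>
    LinearMap.congr_fun (b.ext (f₁ := Tp ∘ₗ mulLeft R x) (f₂ := Tp ∘ₗ mulLeft R y) h) z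

noncomputable def basis [Fintype ι] (hs : IsTraceDual Tp b s) : Module.Basis ι R F :=
  hs.dualBases.basis

@[simp]
theorem coe_basis [Fintype ι] (hs : IsTraceDual Tp b s) : ⇑hs.basis = s :=
  hs.dualBases.coe_basis

end IsTraceDual

end TraceDual

section TensorPairing

variable {R F : Type*} [CommSemiring R] [CommSemiring F] [Algebra R F]

theorem mul'_rTensor_mulLeft (z : F) (t : F ⊗[R] F) :
    mul' R F (rTensor F (mulLeft R z) t) = z * mul' R F t := by
  have : mul' R F ∘ₗ rTensor F (mulLeft R z) = mulLeft R z ∘ₗ mul' R F :=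
    TensorProduct.ext' fun u v => by simp [mul_assoc]
  exact LinearMap.congr_fun this t

theorem mul'_lTensor_mulLeft (z : F) (t : F ⊗[R] F) :
    mul' R F (lTensor F (mulLeft R z) t) = z * mul' R F t := by
  have : mul' R F ∘ₗ lTensor F (mulLeft R z) = mulLeft R z ∘ₗ mul' R F :=
    TensorProduct.ext' fun u v => by simp [mul_left_comm]
  exact LinearMap.congr_fun this t

def IsTensorPairing (Tp : F →ₗ[R] R) (B : (F ⊗[R] F) →ₗ[R] (F ⊗[R] F) →ₗ[R] R) : Prop :=
  ∀ x₁ x₂ y₁ y₂, B (x₁ ⊗ₜ x₂) (y₁ ⊗ₜ y₂) = Tp (x₁ * y₁) * Tp (x₂ * y₂)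

variable {Tp : F →ₗ[R] R} {B : (F ⊗[R] F) →ₗ[R] (F ⊗[R] F) →ₗ[R] R}

namespace IsTensorPairing

theorem symm (hB : IsTensorPairing Tp B) (t l : F ⊗[R] F) : B t l = B l t := by
  have : B.flip = B := TensorProduct.ext' fun x₁ x₂ => TensorProduct.ext' fun y₁ y₂ => by
    rw [flip_apply, hB, hB, mul_comm y₁, mul_comm y₂]
  exact LinearMap.congr_fun₂ this l t

theorem comm (hB : IsTensorPairing Tp B) (t l : F ⊗[R] F) :
    B (TensorProduct.comm R F F t) l = B t (TensorProduct.comm R F F l) := by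
  have : B ∘ₗ (TensorProduct.comm R F F).toLinearMap
      = B.compl₂ (TensorProduct.comm R F F).toLinearMap :=
    TensorProduct.ext' fun x₁ x₂ => TensorProduct.ext' fun y₁ y₂ => by
      simp only [comp_apply, compl₂_apply, LinearEquiv.coe_coe, comm_tmul]
      rw [hB, hB, mul_comm]
  exact LinearMap.congr_fun₂ this t l

theorem lTensor_mulLeft (hB : IsTensorPairing Tp B) (x : F) (t l : F ⊗[R] F) :
    B (lTensor F (mulLeft R x) t) l = B t (lTensor F (mulLeft R x) l) := by
  have : B ∘ₗ lTensor F (mulLeft R x) = B.compl₂ (lTensor F (mulLeft R x)) :=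
    TensorProduct.ext' fun x₁ x₂ => TensorProduct.ext' fun y₁ y₂ => by
      simp only [comp_apply, compl₂_apply, lTensor_tmul, mulLeft_apply]
      rw [hB, hB, mul_assoc, mul_left_comm x₂]
  exact LinearMap.congr_fun₂ this t l

theorem rTensor_mulLeft (hB : IsTensorPairing Tp B) (x : F) (t l : F ⊗[R] F) :
    B (rTensor F (mulLeft R x) t) l = B t (rTensor F (mulLeft R x) l) := by
  have : B ∘ₗ rTensor F (mulLeft R x) = B.compl₂ (rTensor F (mulLeft R x)) :=
    TensorProduct.ext' fun x₁ x₂ => TensorProduct.ext' fun y₁ y₂ => by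
      simp only [comp_apply, compl₂_apply, rTensor_tmul, mulLeft_apply]
      rw [hB, hB, mul_assoc, mul_left_comm x₁]
  exact LinearMap.congr_fun₂ this t l

end IsTensorPairing

end TensorPairing

section DualTensor

variable {R F ι : Type*} [CommSemiring R] [CommSemiring F] [Algebra R F] [Fintype ι]
  [DecidableEq ι] {Tp : F →ₗ[R] R} {B : (F ⊗[R] F) →ₗ[R] (F ⊗[R] F) →ₗ[R] R}
  {b : Module.Basis ι R F} {s : ι → F}

theorem IsTensorPairing.repr_tensorProduct_basis (hB : IsTensorPairing Tp B)
    (hs : IsTraceDual Tp b s) (t : F ⊗[R] F) (p : ι × ι) :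
    (hs.basis.tensorProduct hs.basis).repr t p = B t (b p.1 ⊗ₜ b p.2) :=
  (hs.basis.tensorProduct hs.basis).repr_eq_of_biorthogonal
    (φ := fun p : ι × ι => B.flip (b p.1 ⊗ₜ b p.2)) (fun p q => by
      rw [flip_apply, Module.Basis.tensorProduct_apply', hs.coe_basis, hB, hs, hs]
      simp only [Prod.ext_iff, eq_comm, ite_mul, one_mul, zero_mul, ite_and]) t p

theorem IsTensorPairing.ext_of_pairing (hB : IsTensorPairing Tp B) (hs : IsTraceDual Tp b s)
    {t₁ t₂ : F ⊗[R] F} (h : ∀ i j, B t₁ (b i ⊗ₜ b j) = B t₂ (b i ⊗ₜ b j)) : t₁ = t₂ :=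
  (hs.basis.tensorProduct hs.basis).ext_elem fun p => by
    rw [hB.repr_tensorProduct_basis hs, hB.repr_tensorProduct_basis hs, h]

def casimir (r s : ι → F) : F ⊗[R] F := ∑ k, r k ⊗ₜ s k

theorem IsTensorPairing.pairing_casimir (hB : IsTensorPairing Tp B) (hs : IsTraceDual Tp b s)
    (t : F ⊗[R] F) : B t (casimir b s) = Tp (mul' R F t) := by
  induction t with
  | zero => simp
  | tmul u v =>
    simp only [casimir, map_sum, hB _ _ _ _, mul'_apply, hs.trace_mul_eq_sum u v, mul_comm v]
  | add t₁ t₂ h₁ h₂ => simp [h₁, h₂]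

theorem IsTensorPairing.pairing_rTensor_casimir (hB : IsTensorPairing Tp B)
    (hs : IsTraceDual Tp b s) (z : F) (t : F ⊗[R] F) :
    B t (rTensor F (mulLeft R z) (casimir b s)) = Tp (z * mul' R F t) := by
  rw [← hB.rTensor_mulLeft, hB.pairing_casimir hs, mul'_rTensor_mulLeft]

theorem IsTensorPairing.pairing_lTensor_casimir (hB : IsTensorPairing Tp B)
    (hs : IsTraceDual Tp b s) (z : F) (t : F ⊗[R] F) :
    B t (lTensor F (mulLeft R z) (casimir b s)) = Tp (z * mul' R F t) := by
  rw [← hB.lTensor_mulLeft, hB.pairing_casimir hs, mul'_lTensor_mulLeft]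

end DualTensor

section LambdaOne

variable {F ι : Type} [CommRing F] [Algebra ℚ F]
  {Tp : F →ₗ[ℚ] ℚ} {B : (F ⊗[ℚ] F) →ₗ[ℚ] (F ⊗[ℚ] F) →ₗ[ℚ] ℚ}

theorem rTensor_mulLeft_mem_lambdaOne {l : F ⊗[ℚ] F} (hl : l ∈ lambdaOne F) (x : F) :
    rTensor F (mulLeft ℚ x) l ∈ lambdaOne F := fun y =>
  calc rTensor F (mulLeft ℚ y) (rTensor F (mulLeft ℚ x) l)
      = rTensor F (mulLeft ℚ x) (rTensor F (mulLeft ℚ y) l) := by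
        rw [← rTensor_comp_apply, ← mulLeft_mul, mul_comm, mulLeft_mul, rTensor_comp_apply]
    _ = rTensor F (mulLeft ℚ x) (lTensor F (mulLeft ℚ y) l) := by rw [hl y]
    _ = lTensor F (mulLeft ℚ y) (rTensor F (mulLeft ℚ x) l) := by
        rw [← comp_apply (rTensor F _), ← comp_apply (lTensor F _), rTensor_comp_lTensor,
          lTensor_comp_rTensor]

theorem IsTensorPairing.casimir_mem_lambdaOne [Fintype ι] [DecidableEq ι]
    (hB : IsTensorPairing Tp B) {b : Module.Basis ι ℚ F} {s : ι → F}
    (hs : IsTraceDual Tp b s) : casimir b s ∈ lambdaOne F := fun z =>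
  hB.ext_of_pairing hs fun i j => by
    rw [hB.symm, hB.pairing_rTensor_casimir hs, hB.symm, hB.pairing_lTensor_casimir hs]

theorem IsTensorPairing.pairing_eq_pairing_mul'_tmul_one (hB : IsTensorPairing Tp B)
    {l : F ⊗[ℚ] F} (hl : l ∈ lambdaOne F) (t : F ⊗[ℚ] F) :
    B t l = B (mul' ℚ F t ⊗ₜ 1) l := by
  induction t with
  | zero => simp
  | tmul u v =>
    calc B (u ⊗ₜ v) l = B (lTensor F (mulLeft ℚ v) (u ⊗ₜ 1)) l := by simp
      _ = B (u ⊗ₜ 1) (rTensor F (mulLeft ℚ v) l) := by rw [hB.lTensor_mulLeft, hl]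
      _ = B (mul' ℚ F (u ⊗ₜ v) ⊗ₜ 1) l := by simp [← hB.rTensor_mulLeft, mul_comm]
  | add t₁ t₂ h₁ h₂ => simp only [map_add, LinearMap.add_apply, h₁, h₂, add_tmul]

theorem IsTensorPairing.forall_pairing_lambdaOne_eq_zero_iff [Fintype ι] [DecidableEq ι]
    (hB : IsTensorPairing Tp B) {b : Module.Basis ι ℚ F} {s : ι → F}
    (hs : IsTraceDual Tp b s) (t : F ⊗[ℚ] F) :
    (∀ l ∈ lambdaOne F, B t l = 0) ↔ mul' ℚ F t = 0 := by
  refine ⟨fun h => hs.eq_of_forall_trace_mul_eq fun z => ?_, fun h l hl => ?_⟩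
  · have := h _ (rTensor_mulLeft_mem_lambdaOne (hB.casimir_mem_lambdaOne hs) z)
    rw [hB.pairing_rTensor_casimir hs, mul_comm] at this
    simp [this]
  · rw [hB.pairing_eq_pairing_mul'_tmul_one hl, h, zero_tmul, map_zero, LinearMap.zero_apply]

end LambdaOne

section SymmetricTensors

def symTensor (R : Type*) {F : Type*} [CommSemiring R] [Semiring F] [Algebra R F] (x y : F) :
    F ⊗[R] F :=
  x ⊗ₜ y + y ⊗ₜ x

theorem mul'_symTensor {R F : Type*} [CommSemiring R] [CommSemiring F] [Algebra R F]
    (x y : F) : mul' R F (symTensor R x y) = (2 : R) • (x * y) := by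
  simp [symTensor, mul_comm y, two_smul]

theorem symTensor_mem_symSub {F : Type} [CommRing F] [Algebra ℚ F] (x y : F) :
    symTensor ℚ x y ∈ symSub F := by
  simp [symSub, symTensor, add_comm]

def offDiagSymTensors (R : Type*) {F : Type*} [CommSemiring R] [Semiring F] [Algebra R F]
    (s : Fin 3 → F) : Fin 3 → F ⊗[R] F :=
  ![symTensor R (s 0) (s 1), symTensor R (s 0) (s 2), symTensor R (s 1) (s 2)]

variable {R F : Type*} [CommRing R] [CommRing F] [Algebra R F]
  {Tp : F →ₗ[R] R} {B : (F ⊗[R] F) →ₗ[R] (F ⊗[R] F) →ₗ[R] R}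
  {b : Module.Basis (Fin 3) R F} {s : Fin 3 → F}

theorem IsTensorPairing.pairing_sum_offDiagSymTensors (hB : IsTensorPairing Tp B)
    (hs : IsTraceDual Tp b s) (c : Fin 3 → R) (i j : Fin 3) :
    B (∑ m : Fin 3, c m • offDiagSymTensors R s m) (b i ⊗ₜ b j)
      = !![0, c 0, c 1; c 0, 0, c 2; c 1, c 2, 0] i j := by
  fin_cases i <;> fin_cases j <;>
    simp [Fin.sum_univ_three, offDiagSymTensors, symTensor, hB _ _ _ _, hs _ _]

theorem IsTensorPairing.linearIndependent_offDiagSymTensors (hB : IsTensorPairing Tp B)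
    (hs : IsTraceDual Tp b s) : LinearIndependent R (offDiagSymTensors R s) := by
  rw [Fintype.linearIndependent_iff]
  intro c hc m
  have entry := fun i j => hB.pairing_sum_offDiagSymTensors hs c i j
  simp only [hc, map_zero, LinearMap.zero_apply] at entry
  fin_cases m
  exacts [(entry 0 1).symm, (entry 0 2).symm, (entry 1 2).symm]

end SymmetricTensors

section NSub

variable {F : Type} [CommRing F] [Algebra ℚ F]
  {Tp : F →ₗ[ℚ] ℚ} {B : (F ⊗[ℚ] F) →ₗ[ℚ] (F ⊗[ℚ] F) →ₗ[ℚ] ℚ}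
  {b : Module.Basis (Fin 3) ℚ F} {s : Fin 3 → F}

theorem IsTensorPairing.offDiagSymTensors_mem_nSub (hB : IsTensorPairing Tp B)
    (hs : IsTraceDual Tp b s) (m : Fin 3) : offDiagSymTensors ℚ s m ∈ nSub F B b := by
  refine ⟨by fin_cases m <;> exact symTensor_mem_symSub _ _, fun i => ?_⟩
  fin_cases m <;> fin_cases i <;>
    simp [offDiagSymTensors, symTensor, hB _ _ _ _, hs _ _]

theorem IsTensorPairing.eq_sum_offDiagSymTensors_of_mem_nSub (hB : IsTensorPairing Tp B)
    (hs : IsTraceDual Tp b s) {t : F ⊗[ℚ] F} (ht : t ∈ nSub F B b) :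
    t = ∑ m, ![B t (b 0 ⊗ₜ b 1), B t (b 0 ⊗ₜ b 2), B t (b 1 ⊗ₜ b 2)] m
      • offDiagSymTensors ℚ s m := by
  obtain ⟨hsym, hdiag⟩ := ht
  have hswap (i j : Fin 3) : B t (b j ⊗ₜ b i) = B t (b i ⊗ₜ b j) := by
    rw [← comm_tmul, ← hB.comm, (hsym : TensorProduct.comm ℚ F F t = t)]
  refine hB.ext_of_pairing hs fun i j => ?_
  rw [hB.pairing_sum_offDiagSymTensors hs]
  fin_cases i <;> fin_cases j <;> simp [hdiag] <;> apply hswap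

noncomputable def IsTensorPairing.nSubBasis (hB : IsTensorPairing Tp B)
    (hs : IsTraceDual Tp b s) : Module.Basis (Fin 3) ℚ (nSub F B b) :=
  .mk (v := fun m => ⟨_, hB.offDiagSymTensors_mem_nSub hs m⟩)
    (.of_comp (nSub F B b).subtype (hB.linearIndependent_offDiagSymTensors hs))
    fun ⟨t, ht⟩ _ => (Submodule.mem_span_range_iff_exists_fun _).mpr ⟨_, Subtype.ext
      (by simpa using (hB.eq_sum_offDiagSymTensors_of_mem_nSub hs ht).symm)⟩

theorem IsTensorPairing.coe_nSubBasis (hB : IsTensorPairing Tp B) (hs : IsTraceDual Tp b s)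
    (m : Fin 3) : (hB.nSubBasis hs m : F ⊗[ℚ] F) = offDiagSymTensors ℚ s m := by
  simp [nSubBasis]

end NSub

theorem stmt_19_general (K : Type) [Field K] [CharZero K]
    (Tp : (K × ℚ) →ₗ[ℚ] ℚ)
    (B : ((K × ℚ) ⊗[ℚ] (K × ℚ)) →ₗ[ℚ] ((K × ℚ) ⊗[ℚ] (K × ℚ)) →ₗ[ℚ] ℚ)
    (hB : ∀ x₁ x₂ y₁ y₂ : K × ℚ,
      B (x₁ ⊗ₜ[ℚ] x₂) (y₁ ⊗ₜ[ℚ] y₂) = Tp (x₁ * y₁) * Tp (x₂ * y₂))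
    (rb : Module.Basis (Fin 3) ℚ (K × ℚ)) (r : Fin 3 → K × ℚ) (hr : ∀ i, r i = rb i)
    (s : Fin 3 → K × ℚ)
    (hs : ∀ i j : Fin 3, Tp (s i * r j) = if i = j then 1 else 0) :
    (∃ bN : Module.Basis (Fin 3) ℚ ↥(nSub (K × ℚ) B r),
      (bN 0 : (K × ℚ) ⊗[ℚ] (K × ℚ)) = s 0 ⊗ₜ[ℚ] s 1 + s 1 ⊗ₜ[ℚ] s 0 ∧
      (bN 1 : (K × ℚ) ⊗[ℚ] (K × ℚ)) = s 0 ⊗ₜ[ℚ] s 2 + s 2 ⊗ₜ[ℚ] s 0 ∧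
      (bN 2 : (K × ℚ) ⊗[ℚ] (K × ℚ)) = s 1 ⊗ₜ[ℚ] s 2 + s 2 ⊗ₜ[ℚ] s 1) ∧
    (∀ a₁ a₂ a₃ : ℚ,
      ((∀ l ∈ lambdaOne (K × ℚ),
          B (a₁ • (s 1 ⊗ₜ[ℚ] s 2 + s 2 ⊗ₜ[ℚ] s 1)
              + a₂ • (s 0 ⊗ₜ[ℚ] s 2 + s 2 ⊗ₜ[ℚ] s 0)
              + a₃ • (s 0 ⊗ₜ[ℚ] s 1 + s 1 ⊗ₜ[ℚ] s 0)) l = 0) ↔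
        a₁ • (s 1 * s 2) + a₂ • (s 0 * s 2) + a₃ • (s 0 * s 1) = 0)) := by
  obtain rfl : r = rb := funext hr
  have hB : IsTensorPairing Tp B := hB
  have hs : IsTraceDual Tp rb s := hs
  refine ⟨⟨hB.nSubBasis hs, hB.coe_nSubBasis hs 0, hB.coe_nSubBasis hs 1,
    hB.coe_nSubBasis hs 2⟩, fun a₁ a₂ a₃ => ?_⟩
  change (∀ l ∈ lambdaOne (K × ℚ), B (a₁ • symTensor ℚ (s 1) (s 2)
    + a₂ • symTensor ℚ (s 0) (s 2) + a₃ • symTensor ℚ (s 0) (s 1)) l = 0) ↔ _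
  rw [hB.forall_pairing_lambdaOne_eq_zero_iff hs]
  simp only [map_add, map_smul, mul'_symTensor, smul_comm _ (2 : ℚ), ← smul_add, smul_eq_zero,
    two_ne_zero, false_or]

/-- for a ℤ-basis `(r₁,r₂,r₃)` of a lattice in the pseudo-cubic field
`F = K ⊕ ℚ` with dual basis `(s₁,s₂,s₃)` for the pseudo-trace pairing, the symmetrized
tensors `sᵢ⊗sⱼ + sⱼ⊗sᵢ` form a basis of `N`, and such an element annihilates `Λ₁` iff
`a₁s₂s₃ + a₂s₁s₃ + a₃s₁s₂ = 0` in `F`. -/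
theorem stmt_19 (D : ℕ) (hD0 : 0 < D) (hDns : ¬ IsSquare D)
    (hDmod : D % 4 = 0 ∨ D % 4 = 1)
    (K : Type) [Field K] [CharZero K]
    (sqrtD : K) (hsq : sqrtD ^ 2 = (D : K))
    (hgen : ∀ x : K, ∃ a b : ℚ, x = (a : K) + (b : K) * sqrtD)
    (σ : K →+* K) (hσ : σ sqrtD = -sqrtD)
    (Tp : (K × ℚ) →ₗ[ℚ] ℚ)
    (hTp : ∀ p : K × ℚ, ((Tp p : ℚ) : K) = p.1 + σ p.1 + ((p.2 : ℚ) : K))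
    (B : ((K × ℚ) ⊗[ℚ] (K × ℚ)) →ₗ[ℚ] ((K × ℚ) ⊗[ℚ] (K × ℚ)) →ₗ[ℚ] ℚ)
    (hB : ∀ x₁ x₂ y₁ y₂ : K × ℚ,
      B (x₁ ⊗ₜ[ℚ] x₂) (y₁ ⊗ₜ[ℚ] y₂) = Tp (x₁ * y₁) * Tp (x₂ * y₂))
    (rb : Module.Basis (Fin 3) ℚ (K × ℚ)) (r : Fin 3 → K × ℚ) (hr : ∀ i, r i = rb i)
    (I : Submodule ℤ (K × ℚ)) (hI : I = Submodule.span ℤ (Set.range r))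
    (s : Fin 3 → K × ℚ)
    (hs : ∀ i j : Fin 3, Tp (s i * r j) = if i = j then 1 else 0) :
    (∃ bN : Module.Basis (Fin 3) ℚ ↥(nSub (K × ℚ) B r),
      (bN 0 : (K × ℚ) ⊗[ℚ] (K × ℚ)) = s 0 ⊗ₜ[ℚ] s 1 + s 1 ⊗ₜ[ℚ] s 0 ∧
      (bN 1 : (K × ℚ) ⊗[ℚ] (K × ℚ)) = s 0 ⊗ₜ[ℚ] s 2 + s 2 ⊗ₜ[ℚ] s 0 ∧
      (bN 2 : (K × ℚ) ⊗[ℚ] (K × ℚ)) = s 1 ⊗ₜ[ℚ] s 2 + s 2 ⊗ₜ[ℚ] s 1) ∧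
    (∀ a₁ a₂ a₃ : ℚ,
      ((∀ l ∈ lambdaOne (K × ℚ),
          B (a₁ • (s 1 ⊗ₜ[ℚ] s 2 + s 2 ⊗ₜ[ℚ] s 1)
              + a₂ • (s 0 ⊗ₜ[ℚ] s 2 + s 2 ⊗ₜ[ℚ] s 0)
              + a₃ • (s 0 ⊗ₜ[ℚ] s 1 + s 1 ⊗ₜ[ℚ] s 0)) l = 0) ↔
        a₁ • (s 1 * s 2) + a₂ • (s 0 * s 2) + a₃ • (s 0 * s 1) = 0)) :=
  stmt_19_general K Tp B hB rb r hr s hs
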